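/- Fix an integer m ≥ 2 and p ∈ (0,1). With S, Q, the Ising channel P(y|x,s), and the input distribution u as follows — P(y|x,s) = 1 if x = s = y, 1/2 if x ≠ s and y ∈ {x,s}, 0 otherwise; u(x|s,(1,s)) = p if x = s and (1-p)/(m-1) if x ≠ s; u(x|s,(0,q_s)) = 1[x = s] — define for each node q ∈ Bool × Fin m the belief vector z_q on S by: z_{(1,q_s)}(s) = 1[s = q_s]; z_{(0,q_s)}(q_s) = 2p/(1+p) and z_{(0,q_s)}(s) = (1-p)/((1+p)(m-1)) for s ≠ q_s; and the test distribution T(y|(1,q_s)) = (1+p)/2 if y = q_s and (1-p)/(2(m-1)) otherwise, T(y|(0,q_s)) = 2p/(1+p) if y = q_s and (1-p)/((1+p)(m-1)) otherwise. Then for every node q and every output y ∈ Fin m: Σ_{s,x} z_q(s)·u(x|s,q)·P(y|x,s) = T(y|q). -/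

import Mathlib

/-!
At a node `(0, q_s)` the input repeats the state, so the output equals the state and its law is
the belief `z_q` itself, which is how `T(·|(0, q_s))` is defined. At a node `(1, q_s)` the state
is known to be `q_s`; given the state `s`, the Ising channel outputs `s` with probability
`(1 + w(s)) / 2` and any `y ≠ s` with probability `w(y) / 2`, where `w` is the input law.
With `w(q_s) = p` and `w` uniform off `q_s` this gives `T(·|(1, q_s))`.
-/

/-- The Ising channel law `P(y|x,s)`. -/
noncomputable def IsingP {m : ℕ} (y x s : Fin m) : ℝ :=
  if x = s then (if y = s then 1 else 0)
  else if y = x ∨ y = s then 1 / 2 else 0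

/-- The test distribution `T(y|q)` of the Q-graph for `|X| ≤ 8`. -/
noncomputable def testT (p : ℝ) {m : ℕ} (y : Fin m) (q : Bool × Fin m) : ℝ :=
  if q.1 then (if y = q.2 then (1 + p) / 2 else (1 - p) / (2 * ((m : ℝ) - 1)))
  else (if y = q.2 then 2 * p / (1 + p) else (1 - p) / ((1 + p) * ((m : ℝ) - 1)))

open Finset

section IsingChannel

variable {m : ℕ}

theorem IsingP_self (y s : Fin m) : IsingP y s s = if y = s then 1 else 0 := by
  simp [IsingP]

theorem IsingP_state_eq (x s : Fin m) :
    IsingP s x s = 1 / 2 + if x = s then 1 / 2 else 0 := by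
  unfold IsingP
  split_ifs <;> simp_all
  norm_num

theorem IsingP_of_ne_state {y s : Fin m} (hy : y ≠ s) (x : Fin m) :
    IsingP y x s = if x = y then 1 / 2 else 0 := by
  unfold IsingP
  split_ifs <;> simp_all [eq_comm]

theorem sum_indicator_mul_IsingP (y s : Fin m) :
    ∑ x, (if x = s then 1 else 0) * IsingP y x s = if y = s then 1 else 0 := by
  simp [ite_mul, IsingP_self]

theorem sum_mul_IsingP_state (w : Fin m → ℝ) (s : Fin m) :
    ∑ x, w x * IsingP s x s = (w s + ∑ x, w x) / 2 := by
  simp only [IsingP_state_eq, mul_add, sum_add_distrib, mul_ite, mul_zero, sum_ite_eq',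
    mem_univ, if_true, ← sum_mul]
  ring

theorem sum_mul_IsingP_of_ne_state (w : Fin m → ℝ) {y s : Fin m} (hy : y ≠ s) :
    ∑ x, w x * IsingP y x s = w y / 2 := by
  simp [IsingP_of_ne_state hy, div_eq_mul_inv]

end IsingChannel

theorem sum_ite_self_else_uniform_eq_one {m : ℕ} (hm : 2 ≤ m) (p : ℝ) (s : Fin m) :
    ∑ x : Fin m, (if x = s then p else (1 - p) / ((m : ℝ) - 1)) = 1 := by
  have hm' : (m : ℝ) - 1 ≠ 0 := by
    have : (2 : ℝ) ≤ m := by exact_mod_cast hm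
    linarith
  rw [← add_sum_erase _ _ (mem_univ s), if_pos rfl,
    sum_congr rfl fun x hx => if_neg (ne_of_mem_erase hx), sum_const,
    card_erase_of_mem (mem_univ s), card_univ, Fintype.card_fin, nsmul_eq_mul,
    Nat.cast_sub (by omega : 1 ≤ m), Nat.cast_one, mul_div_cancel₀ _ hm']
  ring

theorem ising_bcjr_invariance_general (m : ℕ) (hm : 2 ≤ m) (p : ℝ)
    (u : Fin m → Fin m → Bool × Fin m → ℝ)
    (hu_known : ∀ s x : Fin m,
      u x s (true, s) = if x = s then p else (1 - p) / ((m : ℝ) - 1))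
    (hu_unknown : ∀ (s qs x : Fin m),
      u x s (false, qs) = if x = s then 1 else 0) :
    let z : Bool × Fin m → Fin m → ℝ := fun q s =>
      if q.1 then (if s = q.2 then 1 else 0)
      else (if s = q.2 then 2 * p / (1 + p) else (1 - p) / ((1 + p) * ((m : ℝ) - 1)))
    ∀ (q : Bool × Fin m) (y : Fin m),
      ∑ s : Fin m, ∑ x : Fin m, z q s * u x s q * IsingP y x s = testT p y q := by
  intro z q y
  simp_rw [mul_assoc, ← mul_sum]
  obtain ⟨_ | _, qs⟩ := q
  · simp only [hu_unknown, sum_indicator_mul_IsingP, mul_ite, mul_one, mul_zero,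
      sum_ite_eq, mem_univ, if_true, z, testT, Bool.false_eq_true, if_false]
  · simp only [z, if_true, ite_mul, one_mul, zero_mul, sum_ite_eq', mem_univ]
    simp only [hu_known]
    rcases eq_or_ne y qs with rfl | hy
    · rw [sum_mul_IsingP_state, sum_ite_self_else_uniform_eq_one hm]
      simp [testT, add_comm]
    · rw [sum_mul_IsingP_of_ne_state _ hy]
      simp only [testT, if_neg hy, if_true]
      rw [div_div, mul_comm]

/-- BCJR invariance, Lemma 2 of the paper: with the belief vectors
`z_{(1,q_s)}(s) = 1[s = q_s]`, `z_{(0,q_s)}(q_s) = 2p/(1+p)` and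
`z_{(0,q_s)}(s) = (1-p)/((1+p)(m-1))` for `s ≠ q_s`, and the input distribution `u`
with `u(x|s,(1,s)) = p` if `x = s` and `(1-p)/(m-1)` otherwise and
`u(x|s,(0,q_s)) = 1[x = s]`, one has
`Σ_{s,x} z_q(s)·u(x|s,q)·P(y|x,s) = T(y|q)` for every node `q` and output `y`. -/
theorem ising_bcjr_invariance (m : ℕ) (hm : 2 ≤ m) (p : ℝ)
    (hp : p ∈ Set.Ioo (0 : ℝ) 1)
    (u : Fin m → Fin m → Bool × Fin m → ℝ)
    (hu_known : ∀ s x : Fin m,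
      u x s (true, s) = if x = s then p else (1 - p) / ((m : ℝ) - 1))
    (hu_unknown : ∀ (s qs x : Fin m),
      u x s (false, qs) = if x = s then 1 else 0) :
    let z : Bool × Fin m → Fin m → ℝ := fun q s =>
      if q.1 then (if s = q.2 then 1 else 0)
      else (if s = q.2 then 2 * p / (1 + p) else (1 - p) / ((1 + p) * ((m : ℝ) - 1)))
    ∀ (q : Bool × Fin m) (y : Fin m),
      ∑ s : Fin m, ∑ x : Fin m, z q s * u x s q * IsingP y x s = testT p y q :=
  ising_bcjr_invariance_general m hm p u hu_known hu_unknown
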